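/- If a binary vector P of length N = 2^n is a union of rows of G_N (or the zero vector), then the bit-reversed vector B_N(P) is also a union of rows of G_N (respectively the zero vector). -/
import Mathlib


def G2 : Matrix (Fin 2) (Fin 2) (ZMod 2) := !![1,0;1,1]

def Gmat : (n : ℕ) → Matrix (Fin (2^n)) (Fin (2^n)) (ZMod 2)
  | 0 => 1
  | n+1 =>
    Matrix.reindex (finProdFinEquiv.trans (finCongr (by rw [pow_succ, Nat.mul_comm])))
      (finProdFinEquiv.trans (finCongr (by rw [pow_succ, Nat.mul_comm])))
      (Matrix.kroneckerMap (· * ·) G2 (Gmat n))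

def bitRev : ℕ → ℕ → ℕ
  | 0, _ => 0
  | n+1, i => 2^n * (i % 2) + bitRev n (i / 2)

theorem bitRev_lt (n i : ℕ) : bitRev n i < 2^n := by
  induction n generalizing i with
  | zero => simp [bitRev]
  | succ n ih =>
    have h1 : i % 2 < 2 := Nat.mod_lt _ (by norm_num)
    have h2 := ih (i / 2)
    have h3 : 2^n * (i % 2) ≤ 2^n := by
      calc 2^n * (i % 2) ≤ 2^n * 1 := Nat.mul_le_mul_left _ (by omega)
        _ = 2^n := by omega
    have h4 : 2^(n+1) = 2^n * 2 := pow_succ 2 n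
    simp only [bitRev]
    omega

def bitRevFin (n : ℕ) (i : Fin (2^n)) : Fin (2^n) := ⟨bitRev n i.val, bitRev_lt n i.val⟩

def bitRevVec (n : ℕ) (P : Fin (2^n) → Bool) : Fin (2^n) → Bool :=
  fun i => P (bitRevFin n i)

def elemPerm (j k i : ℕ) : ℕ :=
  if i < k ∨ k + 2^(j+1) ≤ i then i
  else if i < k + 2^j then i + 2^j
  else i - 2^j

def elemPermVec (n j k : ℕ) (P : Fin (2^n) → Bool) : Fin (2^n) → Bool :=
  fun i => P ⟨elemPerm j k i.val % 2^n, Nat.mod_lt _ (Nat.two_pow_pos n)⟩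

def ElemValid (n j k : ℕ) : Prop := j + 1 ≤ n ∧ 2^(j+1) ∣ k ∧ k < 2^n

def wt {m : ℕ} (P : Fin m → Bool) : ℕ := (Finset.univ.filter fun i => P i = true).card

def IsRowUnion (n : ℕ) (P : Fin (2^n) → Bool) : Prop :=
  ∃ L : Finset (Fin (2^n)), L.Nonempty ∧ ∀ j, P j = true ↔ ∃ i ∈ L, Gmat n i j = 1

def blockLt (n j k : ℕ) (P : Fin (2^n) → Bool) : Prop :=
  ∃ t < 2^j,
    (∀ s < t, P ⟨(k+s) % 2^n, Nat.mod_lt _ (Nat.two_pow_pos n)⟩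
              = P ⟨(k+2^j+s) % 2^n, Nat.mod_lt _ (Nat.two_pow_pos n)⟩) ∧
    P ⟨(k+t) % 2^n, Nat.mod_lt _ (Nat.two_pow_pos n)⟩ = false ∧
    P ⟨(k+2^j+t) % 2^n, Nat.mod_lt _ (Nat.two_pow_pos n)⟩ = true

instance (n j k : ℕ) (P : Fin (2^n) → Bool) : Decidable (blockLt n j k P) := by
  unfold blockLt; infer_instance

def algPhi (n : ℕ) (P : Fin (2^n) → Bool) : Fin (2^n) → Bool :=
  (List.range n).foldl (fun Q j =>
    (List.range (2^(n-j-1))).foldl (fun R m =>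
      if blockLt n j (m * 2^(j+1)) R then elemPermVec n j (m * 2^(j+1)) R else R) Q) P

def Pplus (n : ℕ) (P : Fin (2^(n+1)) → Bool) : Fin (2^n) → Bool :=
  fun m => P ⟨2*m.val, by have := m.isLt; have h : 2^(n+1) = 2^n*2 := pow_succ 2 n; omega⟩
        || P ⟨2*m.val+1, by have := m.isLt; have h : 2^(n+1) = 2^n*2 := pow_succ 2 n; omega⟩

def Pminus (n : ℕ) (P : Fin (2^(n+1)) → Bool) : Fin (2^n) → Bool :=
  fun m => P ⟨2*m.val, by have := m.isLt; have h : 2^(n+1) = 2^n*2 := pow_succ 2 n; omega⟩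
        && P ⟨2*m.val+1, by have := m.isLt; have h : 2^(n+1) = 2^n*2 := pow_succ 2 n; omega⟩

def eraseMap : (n : ℕ) → (Fin (2^n) → Bool) → Fin (2^n) → Bool
  | 0, P => P
  | n+1, P => fun i =>
      if h : i.val < 2^n then eraseMap n (Pplus n P) ⟨i.val, h⟩
      else eraseMap n (Pminus n P)
        ⟨i.val - 2^n, by have := i.isLt; have h2 : 2^(n+1) = 2^n*2 := pow_succ 2 n; omega⟩

def lowHalf (n : ℕ) (P : Fin (2^(n+1)) → Bool) : Fin (2^n) → Bool :=
  fun i => P ⟨i.val, by have := i.isLt; have h : 2^(n+1) = 2^n*2 := pow_succ 2 n; omega⟩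

def highHalf (n : ℕ) (P : Fin (2^(n+1)) → Bool) : Fin (2^n) → Bool :=
  fun i => P ⟨2^n + i.val, by have := i.isLt; have h : 2^(n+1) = 2^n*2 := pow_succ 2 n; omega⟩

def lexLT {m : ℕ} (A B : Fin m → Bool) : Prop :=
  ∃ k, (∀ i, i < k → A i = B i) ∧ A k = false ∧ B k = true

def PatEquiv (n : ℕ) (P P' : Fin (2^n) → Bool) : Prop :=
  ∃ L : List (ℕ × ℕ), (∀ p ∈ L, ElemValid n p.1 p.2) ∧
    P' = bitRevVec n (L.foldl (fun Q p => elemPermVec n p.1 p.2 Q) (bitRevVec n P))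

lemma div_lt2 {n i : ℕ} (h : i < 2^(n+1)) : i / 2^n < 2 :=
  Nat.div_lt_of_lt_mul (by have := pow_succ 2 n; omega)

lemma Gmat_succ (n : ℕ) (i j : Fin (2^(n+1))) :
    Gmat (n+1) i j = G2 ⟨i.val/2^n, div_lt2 i.isLt⟩ ⟨j.val/2^n, div_lt2 j.isLt⟩ *
      Gmat n ⟨i.val % 2^n, Nat.mod_lt _ (Nat.two_pow_pos n)⟩
             ⟨j.val % 2^n, Nat.mod_lt _ (Nat.two_pow_pos n)⟩ := by
  simp [Gmat, Matrix.reindex_apply, Matrix.submatrix_apply, Matrix.kroneckerMap_apply,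
    finProdFinEquiv, Fin.divNat, Fin.modNat]

lemma lt_half {n i : ℕ} (h : i < 2^(n+1)) : i / 2 < 2^n := by
  have := pow_succ 2 n; omega

lemma Gmat_succ' (n : ℕ) (i j : Fin (2^(n+1))) :
    Gmat (n+1) i j = Gmat n ⟨i.val/2, lt_half i.isLt⟩ ⟨j.val/2, lt_half j.isLt⟩ *
      G2 ⟨i.val % 2, Nat.mod_lt _ (by norm_num)⟩ ⟨j.val % 2, Nat.mod_lt _ (by norm_num)⟩ := by
  induction n with
  | zero =>
    rw [Gmat_succ]
    have hi := i.isLt; have hj := j.isLt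
    simp only [pow_zero, Nat.div_one, Nat.mod_one]
    have : Gmat 0 = 1 := rfl
    rw [this]
    have e1 : (⟨i.val/2, lt_half i.isLt⟩ : Fin 1) = 0 := by omega
    have e2 : (⟨j.val/2, lt_half j.isLt⟩ : Fin 1) = 0 := by omega
    rw [e1, e2]
    have : i.val / 1 = i.val % 2 := by omega
    simp only [Matrix.one_apply_eq, one_mul, this, show j.val / 1 = j.val % 2 by omega]
    have e3 : (⟨i.val % 2, Nat.mod_lt _ (by norm_num)⟩ : Fin 2) = i :=
      Fin.ext (by simpa using Nat.mod_eq_of_lt (show i.val < 2 from hi))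
    have e4 : (⟨j.val % 2, Nat.mod_lt _ (by norm_num)⟩ : Fin 2) = j :=
      Fin.ext (by simpa using Nat.mod_eq_of_lt (show j.val < 2 from hj))
    rw [e3, e4, mul_one]
    congr 1 <;> exact Fin.ext rfl
  | succ n ih =>
    rw [Gmat_succ]
    rw [ih ⟨i.val % 2^(n+1), Nat.mod_lt _ (Nat.two_pow_pos _)⟩
          ⟨j.val % 2^(n+1), Nat.mod_lt _ (Nat.two_pow_pos _)⟩]
    rw [Gmat_succ]
    have h1 : 2^(n+1) = 2^n * 2 := pow_succ 2 n
    have ei1 : i.val / 2 / 2^n = i.val / 2^(n+1) := by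
      rw [Nat.div_div_eq_div_mul]; congr 1; omega
    have key : ∀ m : ℕ, m / 2 % 2^n = m % 2^(n+1) / 2 := fun m => by
      have := Nat.mod_mul_right_div_self m 2 (2^n)
      rw [show (2:ℕ) * 2^n = 2^(n+1) by ring] at this
      omega
    have key2 : ∀ m : ℕ, m % 2^(n+1) % 2 = m % 2 := fun m =>
      Nat.mod_mod_of_dvd m ⟨2^n, by ring⟩
    rw [← mul_assoc]
    congr 1
    · congr 1
      · congr 1 <;> exact Fin.ext (by
          simp [← ei1, show j.val/2/2^n = j.val/2^(n+1) from by rw [Nat.div_div_eq_div_mul]; congr 1; omega])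
      · congr 1 <;> exact Fin.ext (by simp [← key])
    · congr 1 <;> exact Fin.ext (by simp [key2])

lemma bitRev_alt (n i : ℕ) (h : i < 2^(n+1)) :
    bitRev (n+1) i = 2 * bitRev n (i % 2^n) + i / 2^n := by
  induction n generalizing i with
  | zero =>
    simp only [bitRev]
    omega
  | succ n ih =>
    have h2 : i / 2 < 2^(n+1) := lt_half h
    have key : (i % 2^(n+1)) / 2 = (i / 2) % 2^n := by
      have := Nat.mod_mul_right_div_self i 2 (2^n)
      rw [show (2:ℕ) * 2^n = 2^(n+1) by ring] at this
      omega
    have key2 : i % 2^(n+1) % 2 = i % 2 := Nat.mod_mod_of_dvd i ⟨2^n, by ring⟩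
    have key3 : i / 2 / 2^n = i / 2^(n+1) := by
      rw [Nat.div_div_eq_div_mul]; congr 1; exact (pow_succ' 2 n).symm
    have hp : (2:ℕ)^(n+1) = 2*2^n := by ring
    have lhs : bitRev (n+2) i = 2^(n+1)*(i%2) + bitRev (n+1) (i/2) := rfl
    rw [lhs, ih (i/2) h2,
      show bitRev (n+1) (i % 2^(n+1)) = 2^n * (i % 2^(n+1) % 2) + bitRev n (i % 2^(n+1) / 2) from rfl,
      key, key2, key3, hp]
    ring

lemma bitRev_invol (n i : ℕ) (h : i < 2^n) : bitRev n (bitRev n i) = i := by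
  induction n generalizing i with
  | zero => simp only [bitRev]; omega
  | succ n ih =>
    have hb : i % 2 < 2 := Nat.mod_lt _ (by norm_num)
    have hr : bitRev n (i / 2) < 2^n := bitRev_lt n (i/2)
    have hx : bitRev (n+1) i < 2^(n+1) := bitRev_lt (n+1) i
    rw [bitRev_alt n _ hx]
    show 2 * bitRev n ((2^n * (i % 2) + bitRev n (i / 2)) % 2^n) +
      (2^n * (i % 2) + bitRev n (i / 2)) / 2^n = i
    rw [Nat.mul_add_mod, Nat.mod_eq_of_lt hr,
      Nat.mul_add_div (Nat.two_pow_pos n), Nat.div_eq_of_lt hr,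
      ih _ (lt_half h)]
    omega

lemma bitRevFin_invol (n : ℕ) (i : Fin (2^n)) : bitRevFin n (bitRevFin n i) = i :=
  Fin.ext (bitRev_invol n i.val i.isLt)

lemma Gmat_rev (n : ℕ) (i j : Fin (2^n)) :
    Gmat n (bitRevFin n i) (bitRevFin n j) = Gmat n i j := by
  induction n with
  | zero =>
    congr 1 <;> omega
  | succ n ih =>
    rw [Gmat_succ, Gmat_succ' n i j]
    have hdiv : ∀ k : Fin (2^(n+1)), (bitRevFin (n+1) k).val / 2^n = k.val % 2 := by
      intro k
      show (2^n * (k.val % 2) + bitRev n (k.val / 2)) / 2^n = k.val % 2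
      rw [Nat.mul_add_div (Nat.two_pow_pos n), Nat.div_eq_of_lt (bitRev_lt n _)]
      omega
    have hmod : ∀ k : Fin (2^(n+1)), (bitRevFin (n+1) k).val % 2^n = bitRev n (k.val / 2) := by
      intro k
      show (2^n * (k.val % 2) + bitRev n (k.val / 2)) % 2^n = bitRev n (k.val / 2)
      rw [Nat.mul_add_mod, Nat.mod_eq_of_lt (bitRev_lt n _)]
    have e1 : (⟨(bitRevFin (n+1) i).val / 2^n, div_lt2 (bitRevFin (n+1) i).isLt⟩ : Fin 2)
        = ⟨i.val % 2, Nat.mod_lt _ (by norm_num)⟩ := Fin.ext (hdiv i)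
    have e2 : (⟨(bitRevFin (n+1) j).val / 2^n, div_lt2 (bitRevFin (n+1) j).isLt⟩ : Fin 2)
        = ⟨j.val % 2, Nat.mod_lt _ (by norm_num)⟩ := Fin.ext (hdiv j)
    have e3 : (⟨(bitRevFin (n+1) i).val % 2^n, Nat.mod_lt _ (Nat.two_pow_pos n)⟩ : Fin (2^n))
        = bitRevFin n ⟨i.val / 2, lt_half i.isLt⟩ := Fin.ext (hmod i)
    have e4 : (⟨(bitRevFin (n+1) j).val % 2^n, Nat.mod_lt _ (Nat.two_pow_pos n)⟩ : Fin (2^n))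
        = bitRevFin n ⟨j.val / 2, lt_half j.isLt⟩ := Fin.ext (hmod j)
    rw [e1, e2, e3, e4, ih]
    ring

lemma Gmat_rev' (n : ℕ) (i j : Fin (2^n)) :
    Gmat n i (bitRevFin n j) = Gmat n (bitRevFin n i) j := by
  conv_lhs => rw [← bitRevFin_invol n i]
  exact Gmat_rev n (bitRevFin n i) j


/-- if P is a union of rows of G_N (or the zero vector), then
B_N(P) is also a union of rows of G_N (respectively the zero vector). -/
theorem stmt12 (n : ℕ) (P : Fin (2^n) → Bool) :
    ((∀ j, P j = false) → ∀ j, bitRevVec n P j = false) ∧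
    (IsRowUnion n P → IsRowUnion n (bitRevVec n P)) := by
  constructor
  · intro h j
    exact h _
  · rintro ⟨L, hne, hL⟩
    refine ⟨L.image (bitRevFin n), hne.image _, fun j => ?_⟩
    have hrw : bitRevVec n P j = P (bitRevFin n j) := rfl
    rw [hrw, hL]
    constructor
    · rintro ⟨i, hi, hGi⟩
      exact ⟨bitRevFin n i, Finset.mem_image_of_mem _ hi, by rwa [Gmat_rev' n i j] at hGi⟩
    · rintro ⟨i', hi', hGi⟩
      obtain ⟨i, hi, rfl⟩ := Finset.mem_image.mp hi'
      refine ⟨i, hi, ?_⟩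
      rwa [Gmat_rev' n i j]
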